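/- Any n×n real symmetric positive definite matrix S is congruent to a positive diagonal matrix by an indefinite orthogonal matrix: there exist V with Vᵀ I_{p,q} V = I_{p,q} and a positive diagonal D such that S = Vᵀ D V. -/

import Mathlib

/-!
Writing `S = Bᵀ B` and diagonalising the symmetric matrix `B J Bᵀ` by an orthogonal matrix gives
`N` with `N Nᵀ = S` and `Nᵀ J N = diag ν`. Since `N` is invertible, Sylvester's law of inertia
says that `ν` has as many positive entries as `J`, namely `p`, and `ν` has no zero entry; so after
permuting the columns of `N` the signs of `ν` are those of `J`. Dividing the `i`-th column by
`√|νᵢ|` gives `W` with `Wᵀ J W = J` and `S = W diag |ν| Wᵀ`, and `V = Wᵀ` works because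
`J`-orthogonal matrices are closed under transposition.
-/

open Matrix

variable {n : Type*} [Fintype n]

section CommRing

variable {R : Type*} [CommRing R]

lemma submatrix_id_mul_transpose_submatrix_id (N : Matrix n n R) (σ : Equiv.Perm n) :
    N.submatrix id σ * (N.submatrix id σ)ᵀ = N * Nᵀ := by
  rw [transpose_submatrix, submatrix_mul_equiv, submatrix_id_id]

variable [DecidableEq n]

lemma transpose_submatrix_mul_mul_submatrix {A N : Matrix n n R} {ν : n → R}
    (h : Nᵀ * A * N = diagonal ν) (σ : Equiv.Perm n) :
    (N.submatrix id σ)ᵀ * A * N.submatrix id σ = diagonal (ν ∘ σ) := by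
  rw [transpose_submatrix, ← submatrix_id_id A, ← submatrix_mul _ _ _ _ _ Function.bijective_id,
    ← submatrix_mul _ _ _ _ _ Function.bijective_id, h, submatrix_diagonal_equiv]

lemma isUnit_of_transpose_mul_mul_eq_diagonal {A M : Matrix n n R} {ν : n → R}
    (hA : IsUnit A.det) (hM : IsUnit M.det) (h : Mᵀ * A * M = diagonal ν) (i : n) :
    IsUnit (ν i) := by
  have hdet : IsUnit (diagonal ν).det := by
    rw [← h, det_mul, det_mul, det_transpose]
    exact (hM.mul hA).mul hM
  rw [det_diagonal] at hdet
  exact isUnit_of_dvd_unit (Finset.dvd_prod_of_mem ν (Finset.mem_univ i)) hdet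

lemma mul_mul_transpose_eq_of_transpose_mul_mul_eq {J N : Matrix n n R} (hJ : J * J = 1)
    (h : Nᵀ * J * N = J) : N * J * Nᵀ = J := by
  have hinv : N * (J * Nᵀ * J) = 1 := mul_eq_one_comm.mp <| by
    rw [show J * Nᵀ * J * N = J * (Nᵀ * J * N) by simp only [Matrix.mul_assoc], h, hJ]
  calc N * J * Nᵀ = N * (J * Nᵀ * J) * J := by simp only [Matrix.mul_assoc, hJ, Matrix.mul_one]
    _ = J := by rw [hinv, Matrix.one_mul]

lemma weightedSumSquares_eq_dotProduct_mulVec (w x : n → R) :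
    QuadraticMap.weightedSumSquares R w x = x ⬝ᵥ (diagonal w *ᵥ x) := by
  simp [QuadraticMap.weightedSumSquares_apply, dotProduct, mulVec_diagonal, mul_left_comm]

lemma weightedSumSquares_mulVec_of_transpose_mul_diagonal_mul_eq {M : Matrix n n R}
    {d e : n → R} (h : Mᵀ * diagonal e * M = diagonal d) (x : n → R) :
    QuadraticMap.weightedSumSquares R e (M *ᵥ x) = QuadraticMap.weightedSumSquares R d x := by
  rw [weightedSumSquares_eq_dotProduct_mulVec, weightedSumSquares_eq_dotProduct_mulVec, ← h,
    ← mulVec_mulVec, ← mulVec_mulVec, dotProduct_mulVec x, vecMul_transpose]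

lemma equivalent_weightedSumSquares_of_transpose_mul_diagonal_mul_eq {M : Matrix n n R}
    (hM : IsUnit M.det) {d e : n → R} (h : Mᵀ * diagonal e * M = diagonal d) :
    (QuadraticMap.weightedSumSquares R d).Equivalent (QuadraticMap.weightedSumSquares R e) :=
  ⟨{ toLinearEquiv := M.toLinearEquiv' (M.invertibleOfIsUnitDet hM)
     map_app' := weightedSumSquares_mulVec_of_transpose_mul_diagonal_mul_eq h }⟩

end CommRing

lemma ncard_pos_eq_of_transpose_mul_diagonal_mul_eq {𝕜 : Type*} [Field 𝕜] [LinearOrder 𝕜]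
    [IsStrictOrderedRing 𝕜] [DecidableEq n] {M : Matrix n n 𝕜} (hM : IsUnit M.det)
    {d e : n → 𝕜} (h : Mᵀ * diagonal e * M = diagonal d) :
    {i | 0 < d i}.ncard = {i | 0 < e i}.ncard := by
  rw [← QuadraticForm.sigPos_weightedSumSquares, QuadraticForm.sigPos_of_equiv_weightedSumSquares
    (equivalent_weightedSumSquares_of_transpose_mul_diagonal_mul_eq hM h)]

lemma Equiv.Perm.exists_apply_iff_of_ncard_eq {α : Type*} [Finite α] {P Q : α → Prop}
    (h : {i | Q i}.ncard = {i | P i}.ncard) : ∃ σ : Equiv.Perm α, ∀ i, P (σ i) ↔ Q i := by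
  classical
  obtain ⟨e⟩ := Finite.card_eq.mp h
  exact ⟨e.extendSubtype, fun i => ⟨fun hi => by_contra fun hQ => e.extendSubtype_not_mem i hQ hi,
    e.extendSubtype_mem i⟩⟩

open scoped MatrixOrder in
lemma exists_mul_transpose_eq_and_transpose_mul_mul_eq_diagonal [DecidableEq n]
    {S A : Matrix n n ℝ} (hS : S.PosSemidef) (hA : A.IsSymm) :
    ∃ (N : Matrix n n ℝ) (ν : n → ℝ), N * Nᵀ = S ∧ Nᵀ * A * N = diagonal ν := by
  obtain ⟨B, rfl⟩ := CStarAlgebra.nonneg_iff_eq_star_mul_self.mp hS.nonneg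
  have hBAB : (B * A * Bᵀ).IsHermitian := by
    simp [IsHermitian, transpose_mul, hA.eq, Matrix.mul_assoc]
  have hU := Unitary.coe_mul_star_self hBAB.eigenvectorUnitary
  have hdiag := hBAB.conjStarAlgAut_star_eigenvectorUnitary
  simp only [Unitary.conjStarAlgAut_star_apply, Unitary.coe_star, star_eq_conjTranspose,
    conjTranspose_eq_transpose_of_trivial, RCLike.ofReal_real_eq_id, Function.id_comp] at hU hdiag
  refine ⟨Bᵀ * hBAB.eigenvectorUnitary, hBAB.eigenvalues, ?_, ?_⟩
  · rw [transpose_mul, transpose_transpose, Matrix.mul_assoc, ← Matrix.mul_assoc _ _ B, hU,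
      Matrix.one_mul, star_eq_conjTranspose, conjTranspose_eq_transpose_of_trivial]
  · rw [← hdiag, transpose_mul, transpose_transpose]
    simp only [Matrix.mul_assoc]

lemma mul_abs_eq_self_of_pos_iff {x s : ℝ} (hx : x ≠ 0) (hs : s = 1 ∨ s = -1)
    (h : 0 < x ↔ 0 < s) : s * |x| = x := by
  rcases hs with rfl | rfl
  · simp [abs_of_pos (h.2 one_pos)]
  · have : ¬ 0 < x := fun hx' => by linarith [h.1 hx']
    simp [abs_of_neg (lt_of_le_of_ne (not_lt.1 this) hx)]

lemma exists_mul_diagonal_abs_mul_transpose_eq_of_signs [DecidableEq n] {N : Matrix n n ℝ}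
    {ν s : n → ℝ} (hν : ∀ i, ν i ≠ 0) (hsign : ∀ i, s i * |ν i| = ν i)
    (h : Nᵀ * diagonal s * N = diagonal ν) :
    ∃ W : Matrix n n ℝ, W * diagonal (fun i => |ν i|) * Wᵀ = N * Nᵀ ∧
      Wᵀ * diagonal s * W = diagonal s := by
  set w : n → ℝ := fun i => (√|ν i|)⁻¹
  have hw : ∀ i, w i * |ν i| * w i = 1 := fun i => by
    rw [mul_right_comm, ← mul_inv, Real.mul_self_sqrt (abs_nonneg _),
      inv_mul_cancel₀ (abs_pos.2 (hν i)).ne']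
  refine ⟨N * diagonal w, ?_, ?_⟩
  · rw [transpose_mul, diagonal_transpose]
    calc N * diagonal w * diagonal (fun i => |ν i|) * (diagonal w * Nᵀ)
        = N * (diagonal w * diagonal (fun i => |ν i|) * diagonal w) * Nᵀ := by
          simp only [Matrix.mul_assoc]
      _ = N * Nᵀ := by
          rw [diagonal_mul_diagonal, diagonal_mul_diagonal, funext hw, diagonal_one,
            Matrix.mul_one]
  · rw [transpose_mul, diagonal_transpose]
    calc diagonal w * Nᵀ * diagonal s * (N * diagonal w)
        = diagonal w * (Nᵀ * diagonal s * N) * diagonal w := by simp only [Matrix.mul_assoc]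
      _ = diagonal s := by
          rw [h, diagonal_mul_diagonal, diagonal_mul_diagonal]
          exact congrArg diagonal (funext fun i => by
            rw [← hsign i]
            linear_combination s i * hw i)

theorem posdef_congruent_diagonal_indefinite_orthogonal (p q : ℕ)
    (S : Matrix (Fin (p + q)) (Fin (p + q)) ℝ) (hS : S.PosDef) :
    ∃ (V : Matrix (Fin (p + q)) (Fin (p + q)) ℝ) (d : Fin (p + q) → ℝ),
      Vᵀ * Matrix.diagonal (fun (i : Fin (p + q)) => if (i : ℕ) < p then (1 : ℝ) else -1) * V =
        Matrix.diagonal (fun (i : Fin (p + q)) => if (i : ℕ) < p then (1 : ℝ) else -1) ∧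
      (∀ i, 0 < d i) ∧
      S = Vᵀ * Matrix.diagonal d * V := by
  set s : Fin (p + q) → ℝ := fun i => if (i : ℕ) < p then 1 else -1 with hs
  have hs1 : ∀ i, s i = 1 ∨ s i = -1 := fun i => by by_cases h : (i : ℕ) < p <;> simp [hs, h]
  have hJ : diagonal s * diagonal s = 1 := by
    rw [diagonal_mul_diagonal, ← diagonal_one]
    exact congrArg diagonal (funext fun i => by rcases hs1 i with h | h <;> rw [h] <;> norm_num)
  obtain ⟨N, ν, hSN, hJN⟩ :=
    exists_mul_transpose_eq_and_transpose_mul_mul_eq_diagonal hS.posSemidef (isSymm_diagonal s)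
  have hN : IsUnit N.det := isUnit_of_mul_isUnit_left (y := Nᵀ.det) <| by
    rw [← det_mul, hSN]
    exact hS.det_pos.ne'.isUnit
  have hν : ∀ i, ν i ≠ 0 := fun i =>
    (isUnit_of_transpose_mul_mul_eq_diagonal
      (IsUnit.of_mul_eq_one _ (by rw [← det_mul, hJ, det_one])) hN hJN i).ne_zero
  obtain ⟨σ, hσ⟩ := Equiv.Perm.exists_apply_iff_of_ncard_eq
    (ncard_pos_eq_of_transpose_mul_diagonal_mul_eq hN hJN).symm
  obtain ⟨W, hSW, hJW⟩ := exists_mul_diagonal_abs_mul_transpose_eq_of_signs (fun i => hν (σ i))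
    (fun i => mul_abs_eq_self_of_pos_iff (hν _) (hs1 i) (hσ i))
    (transpose_submatrix_mul_mul_submatrix hJN σ)
  refine ⟨Wᵀ, fun i => |ν (σ i)|, ?_, fun i => abs_pos.2 (hν _), ?_⟩
  · simpa using mul_mul_transpose_eq_of_transpose_mul_mul_eq hJ hJW
  · rw [transpose_transpose, hSW, submatrix_id_mul_transpose_submatrix_id, hSN]
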